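/- arXiv:2301.11907 — 5 statements merged into one kernel-verified Lean document; each statement's English description precedes it below -/
import Mathlib

section
/- Let G be a group, A a G-graded associative algebra, and L a G-graded Lie subspace of A (meaning L is a graded subspace closed under the commutator, and the commutator restricted to L makes L a G-graded Lie algebra). If x, y ∈ L are homogeneous elements with deg x = g, deg y = h, and gh ≠ hg, then xy = 0 in A. -/
/-- Vanishing lemma: in a `G`-pair `(L, A)`, homogeneous elements of `L` whose
degrees do not commute in `G` have vanishing product in `A`. -/
theorem stmt_0 {F G A : Type*} [Field F] [Group G] [DecidableEq G]
    [Ring A] [Algebra F A]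
    (𝒜 : G → Submodule F A)
    (hinternal : DirectSum.IsInternal 𝒜)
    (hmul : ∀ g h : G, ∀ a ∈ 𝒜 g, ∀ b ∈ 𝒜 h, a * b ∈ 𝒜 (g * h))
    (L : G → Submodule F A)
    (hLsub : ∀ g : G, L g ≤ 𝒜 g)
    (hLbrk : ∀ g h : G, ∀ a ∈ L g, ∀ b ∈ L h, a * b - b * a ∈ L (g * h))
    (g h : G) (x y : A) (hx : x ∈ L g) (hy : y ∈ L h)
    (hgh : g * h ≠ h * g) : x * y = 0 := by
  have h1 : y * x - x * y ∈ 𝒜 (h * g) := hLsub _ (hLbrk h g y hy x hx)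
  have h2 : y * x ∈ 𝒜 (h * g) := hmul h g y (hLsub h hy) x (hLsub g hx)
  have h3 : x * y ∈ 𝒜 (h * g) := by
    have := Submodule.sub_mem _ h2 h1
    simpa using this
  have h4 : x * y ∈ 𝒜 (g * h) := hmul g h x (hLsub g hx) y (hLsub h hy)
  have hd : Disjoint (𝒜 (g * h)) (𝒜 (h * g)) :=
    hinternal.submodule_iSupIndep.pairwiseDisjoint hgh
  exact (Submodule.disjoint_def.mp hd) _ h4 h3
end

section
/- Let G be a group, F a field, and X_G a set of variables each assigned a degree in G. Let I be the T_G-ideal of the free associative algebra F⟨X_G⟩ generated by the monomials x₁^{(g)} x₂^{(h)} with gh ≠ hg. Then I is a graded ideal, and the quotient F_G(X_G) = F⟨X_G⟩/I has as a homogeneous vector space basis the images of all monomials x_{i₁}^{(g₁)} ··· x_{i_m}^{(g_m)} such that {g₁, ..., g_m} generates an abelian subgroup of G. -/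
namespace Stmt5Aux

open Submodule

variable {F G X : Type*} [Field F] [Group G]

/-- The monomial attached to a list of variables. -/
noncomputable def mn (F : Type*) [Field F] {X : Type*} (s : List X) : FreeAlgebra F X :=
  (s.map (FreeAlgebra.ι F)).prod

theorem mn_append (s t : List X) : mn F (s ++ t) = mn F s * mn F t := by
  simp [mn]

theorem mn_eq_basis (s : List X) :
    mn F s = FreeAlgebra.basisFreeMonoid F X (FreeMonoid.ofList s) := by
  have hb : ∀ m : FreeMonoid X, FreeAlgebra.basisFreeMonoid F X m =
      (FreeAlgebra.equivMonoidAlgebraFreeMonoid (R := F) (X := X)).symm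
        (MonoidAlgebra.single m 1) := by
    intro m
    simp [FreeAlgebra.basisFreeMonoid, Finsupp.basisSingleOne]
  induction s with
  | nil =>
      rw [hb]
      have : (MonoidAlgebra.single (FreeMonoid.ofList ([] : List X)) (1 : F)) =
          (1 : MonoidAlgebra F (FreeMonoid X)) := rfl
      rw [this, map_one]
      rfl
  | cons x t ih =>
      rw [hb]
      have h1 : (FreeMonoid.ofList (x :: t)) = FreeMonoid.of x * FreeMonoid.ofList t := rfl
      have h2 : (MonoidAlgebra.single (FreeMonoid.of x * FreeMonoid.ofList t) (1 : F)) =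
          MonoidAlgebra.single (FreeMonoid.of x) 1 *
            MonoidAlgebra.single (FreeMonoid.ofList t) 1 := by
        rw [MonoidAlgebra.single_mul_single, one_mul]
      rw [h1, h2, map_mul]
      have h3 : (FreeAlgebra.equivMonoidAlgebraFreeMonoid (R := F) (X := X)).symm
          (MonoidAlgebra.single (FreeMonoid.of x) 1) = FreeAlgebra.ι F x := by
        apply (FreeAlgebra.equivMonoidAlgebraFreeMonoid (R := F) (X := X)).injective
        rw [AlgEquiv.apply_symm_apply]
        simp [FreeAlgebra.equivMonoidAlgebraFreeMonoid]
      rw [h3, ← hb, ← ih]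
      simp [mn]

theorem mn_li : LinearIndependent F (mn F (X := X)) := by
  have h : (mn F (X := X)) = (FreeAlgebra.basisFreeMonoid F X) ∘ FreeMonoid.ofList :=
    funext fun s => mn_eq_basis s
  rw [h]
  exact (FreeAlgebra.basisFreeMonoid F X).linearIndependent.comp _
    (FreeMonoid.ofList).injective

theorem span_mn_top : span F (Set.range (mn F (X := X))) = ⊤ := by
  have h : (mn F (X := X)) = (FreeAlgebra.basisFreeMonoid F X) ∘ FreeMonoid.ofList :=
    funext fun s => mn_eq_basis s
  rw [h, Set.range_comp, Equiv.range_eq_univ, Set.image_univ]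
  exact (FreeAlgebra.basisFreeMonoid F X).span_eq

/-- The homogeneous component. -/
def cmp (F : Type*) [Field F] {G X : Type*} [Group G] (d : X → G) (g : G) :
    Submodule F (FreeAlgebra F X) :=
  span F {w | ∃ s : List X, (s.map d).prod = g ∧ w = mn F s}

/-- The `T_G`-ideal. -/
def idl (F : Type*) [Field F] {G X : Type*} [Group G] (d : X → G) :
    Submodule F (FreeAlgebra F X) :=
  span F {w | ∃ (g h : G) (u v a b : FreeAlgebra F X),
    g * h ≠ h * g ∧ u ∈ cmp F d g ∧ v ∈ cmp F d h ∧ w = a * (u * v) * b}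

/-- "good" lists: degrees generate an abelian subgroup. -/
def gd {G X : Type*} [Group G] (d : X → G) (s : List X) : Prop :=
  IsMulCommutative (Subgroup.closure (d '' {x | x ∈ s}))

theorem mem_cmp (d : X → G) (s : List X) : mn F s ∈ cmp F d ((s.map d).prod) :=
  subset_span ⟨s, rfl, rfl⟩

theorem idl_mul_left (d : X → G) (r : FreeAlgebra F X) {x : FreeAlgebra F X}
    (hx : x ∈ idl F d) : r * x ∈ idl F d := by
  refine Submodule.span_induction (p := fun x _ => r * x ∈ idl F d) ?_ ?_ ?_ ?_ hx
  · rintro w ⟨g, h, u, v, a, b, hne, hu, hv, rfl⟩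
    exact subset_span ⟨g, h, u, v, r * a, b, hne, hu, hv, by simp [mul_assoc]⟩
  · simp only [mul_zero]; exact zero_mem _
  · intro y z _ _ hy hz; rw [mul_add]; exact add_mem hy hz
  · intro c y _ hy; rw [mul_smul_comm]; exact smul_mem _ _ hy

theorem idl_mul_right (d : X → G) (r : FreeAlgebra F X) {x : FreeAlgebra F X}
    (hx : x ∈ idl F d) : x * r ∈ idl F d := by
  refine Submodule.span_induction (p := fun x _ => x * r ∈ idl F d) ?_ ?_ ?_ ?_ hx
  · rintro w ⟨g, h, u, v, a, b, hne, hu, hv, rfl⟩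
    exact subset_span ⟨g, h, u, v, a, b * r, hne, hu, hv, by simp [mul_assoc]⟩
  · simp only [zero_mul]; exact zero_mem _
  · intro y z _ _ hy hz; rw [add_mul]; exact add_mem hy hz
  · intro c y _ hy; rw [smul_mul_assoc]; exact smul_mem _ _ hy

theorem closure_isCommutative_of_comm {k : Set G}
    (hcomm : ∀ x ∈ k, ∀ y ∈ k, x * y = y * x) :
    IsMulCommutative (Subgroup.closure k) := by
  rw [← Subgroup.le_centralizer_iff_isMulCommutative]
  have h1 : Subgroup.closure k ≤ Subgroup.centralizer k :=
    (Subgroup.closure_le _).mpr fun x hx =>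
      Subgroup.mem_centralizer_iff.mpr fun y hy => hcomm y hy x hx
  exact (Subgroup.closure_le_centralizer_centralizer k).trans
    (Subgroup.centralizer_le (SetLike.coe_subset_coe.mpr h1))

theorem exists_pair_of_not_gd {d : X → G} {s : List X} (hs : ¬ gd d s) :
    ∃ x ∈ s, ∃ y ∈ s, d x * d y ≠ d y * d x := by
  by_contra hc
  push_neg at hc
  exact hs (closure_isCommutative_of_comm (by rintro a ⟨x, hx, rfl⟩ b ⟨y, hy, rfl⟩; exact hc x hx y hy))

theorem exists_split {d : X → G} :
    ∀ (s : List X) (x y : X), x ∈ s → y ∈ s → d x * d y ≠ d y * d x →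
      ∃ p a m b q, s = p ++ a :: (m ++ b :: q) ∧ d a * d b ≠ d b * d a := by
  intro s
  induction s with
  | nil => intro x y hx; simp at hx
  | cons z t ih =>
      intro x y hx hy hne
      rcases List.mem_cons.mp hx with rfl | hx'
      · rcases List.mem_cons.mp hy with rfl | hy'
        · exact absurd rfl hne
        · obtain ⟨m, q, rfl⟩ := List.append_of_mem hy'
          exact ⟨[], x, m, y, q, rfl, hne⟩
      · rcases List.mem_cons.mp hy with rfl | hy'
        · obtain ⟨m, q, rfl⟩ := List.append_of_mem hx'
          exact ⟨[], y, m, x, q, rfl, fun h => hne h.symm⟩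
        · obtain ⟨p, a, m, b, q, heq, h2⟩ := ih x y hx' hy' hne
          exact ⟨z :: p, a, m, b, q, by rw [heq]; rfl, h2⟩

theorem mem_idl_of_split {d : X → G} (p : List X) (a : X) (m : List X) (b : X) (q : List X)
    (hne : d a * d b ≠ d b * d a) :
    mn F (p ++ a :: (m ++ b :: q)) ∈ idl F d := by
  by_cases hAM : d a * (m.map d).prod = (m.map d).prod * d a
  · -- blocks [a] and m ++ [b]
    have hMB : (((m ++ [b]).map d)).prod = (m.map d).prod * d b := by simp
    have hne' : (([a].map d)).prod * (((m ++ [b]).map d)).prod ≠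
        (((m ++ [b]).map d)).prod * (([a].map d)).prod := by
      simp only [List.map_cons, List.map_nil, List.prod_cons, List.prod_nil, mul_one, hMB]
      intro hEq
      apply hne
      have hA : Commute (d a) ((m.map d).prod) := hAM
      have h2 : Commute (d a) ((m.map d).prod * d b) := hEq
      have h3 := hA.inv_right.mul_right h2
      rw [inv_mul_cancel_left] at h3
      exact h3
    refine subset_span ⟨_, _, mn F [a], mn F (m ++ [b]), mn F p, mn F q, hne',
      mem_cmp d [a], mem_cmp d (m ++ [b]), ?_⟩
    have hl : p ++ a :: (m ++ b :: q) = (p ++ ([a] ++ (m ++ [b]))) ++ q := by simp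
    rw [hl, mn_append, mn_append, mn_append]
  · -- blocks [a] and m
    have hne' : (([a].map d)).prod * ((m.map d)).prod ≠
        ((m.map d)).prod * (([a].map d)).prod := by
      simpa using hAM
    refine subset_span ⟨_, _, mn F [a], mn F m, mn F p, mn F (b :: q), hne',
      mem_cmp d [a], mem_cmp d m, ?_⟩
    have hl : p ++ a :: (m ++ b :: q) = (p ++ ([a] ++ m)) ++ (b :: q) := by simp
    rw [hl, mn_append, mn_append, mn_append]

theorem mem_idl_of_not_gd {d : X → G} {s : List X} (hs : ¬ gd d s) : mn F s ∈ idl F d := by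
  obtain ⟨x, hx, y, hy, hne⟩ := exists_pair_of_not_gd hs
  obtain ⟨p, a, m, b, q, heq, h2⟩ := exists_split s x y hx hy hne
  rw [heq]
  exact mem_idl_of_split p a m b q h2

theorem prod_mem_closure {d : X → G} {s w : List X} (hw : ∀ x ∈ w, x ∈ s) :
    (w.map d).prod ∈ Subgroup.closure (d '' {x | x ∈ s}) := by
  refine list_prod_mem ?_
  intro g hg
  obtain ⟨x, hx, rfl⟩ := List.mem_map.mp hg
  exact Subgroup.subset_closure ⟨x, hw x hx, rfl⟩

theorem not_gd_block {d : X → G} {g h : G} (hne : g * h ≠ h * g) {s t : List X}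
    (hs : (s.map d).prod = g) (ht : (t.map d).prod = h) (p q : List X) :
    ¬ gd d (((p ++ s) ++ t) ++ q) := by
  intro hgd
  apply hne
  subst hs ht
  haveI : IsMulCommutative (Subgroup.closure (d '' {x | x ∈ ((p ++ s) ++ t) ++ q})) := hgd
  have hmem : ∀ w : List X, (∀ x ∈ w, x ∈ ((p ++ s) ++ t) ++ q) →
      (w.map d).prod ∈ Subgroup.closure (d '' {x | x ∈ ((p ++ s) ++ t) ++ q}) :=
    fun w hw => prod_mem_closure hw
  exact Subgroup.mul_comm_of_mem_isMulCommutative _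
    (hmem s (fun x hx => by simp [hx]))
    (hmem t (fun x hx => by simp [hx]))

theorem idl_le_span_bad (d : X → G) :
    idl F d ≤ span F (mn F '' {s : List X | ¬ gd d s}) := by
  set B := span F (mn F '' {s : List X | ¬ gd d s}) with hB
  refine span_le.mpr ?_
  rintro w ⟨g, h, u, v, a, b, hne, hu, hv, rfl⟩
  have step1 : ∀ u' ∈ cmp F d g, ∀ v' ∈ cmp F d h, ∀ p q : List X,
      mn F p * (u' * v') * mn F q ∈ B := by
    intro u' hu'
    refine Submodule.span_induction
      (p := fun u' _ => ∀ v' ∈ cmp F d h, ∀ p q : List X, mn F p * (u' * v') * mn F q ∈ B)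
      ?_ ?_ ?_ ?_ hu'
    · rintro w' ⟨s, hs, rfl⟩ v' hv'
      refine Submodule.span_induction
        (p := fun v' _ => ∀ p q : List X, mn F p * (mn F s * v') * mn F q ∈ B)
        ?_ ?_ ?_ ?_ hv'
      · rintro w'' ⟨t, ht, rfl⟩ p q
        have hprod : mn F p * (mn F s * mn F t) * mn F q = mn F (((p ++ s) ++ t) ++ q) := by
          rw [mn_append, mn_append, mn_append, mul_assoc (mn F p) (mn F s) (mn F t)]
        rw [hprod]
        exact subset_span ⟨((p ++ s) ++ t) ++ q, not_gd_block hne hs ht p q, rfl⟩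
      · intro p q; simp only [mul_zero, zero_mul]; exact zero_mem _
      · intro y z _ _ hy hz p q
        rw [mul_add, mul_add, add_mul]
        exact add_mem (hy p q) (hz p q)
      · intro c y _ hy p q
        rw [mul_smul_comm, mul_smul_comm, smul_mul_assoc]
        exact smul_mem _ _ (hy p q)
    · intro v' hv' p q; simp only [zero_mul, mul_zero]; exact zero_mem _
    · intro y z _ _ hy hz v' hv' p q
      rw [add_mul, mul_add, add_mul]
      exact add_mem (hy v' hv' p q) (hz v' hv' p q)
    · intro c y _ hy v' hv' p q
      rw [smul_mul_assoc, mul_smul_comm, smul_mul_assoc]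
      exact smul_mem _ _ (hy v' hv' p q)
  -- now expand a and b over monomials
  have htop : ∀ z : FreeAlgebra F X, z ∈ span F (Set.range (mn F (X := X))) := by
    intro z; rw [span_mn_top]; trivial
  have step2 : ∀ a' : FreeAlgebra F X, ∀ b' : FreeAlgebra F X,
      a' * (u * v) * b' ∈ B := by
    intro a'
    refine Submodule.span_induction
      (p := fun a' _ => ∀ b' : FreeAlgebra F X, a' * (u * v) * b' ∈ B)
      ?_ ?_ ?_ ?_ (htop a')
    · rintro w' ⟨p, rfl⟩ b'
      refine Submodule.span_induction
        (p := fun b' _ => mn F p * (u * v) * b' ∈ B)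
        ?_ ?_ ?_ ?_ (htop b')
      · rintro w'' ⟨q, rfl⟩
        exact step1 u hu v hv p q
      · simp only [mul_zero]; exact zero_mem _
      · intro y z _ _ hy hz; rw [mul_add]; exact add_mem hy hz
      · intro c y _ hy; rw [mul_smul_comm]; exact smul_mem _ _ hy
    · intro b'; simp only [zero_mul]; exact zero_mem _
    · intro y z _ _ hy hz b'; rw [add_mul, add_mul]; exact add_mem (hy b') (hz b')
    · intro c y _ hy b'; rw [smul_mul_assoc, smul_mul_assoc]; exact smul_mem _ _ (hy b')
  exact step2 a b

theorem idl_graded (d : X → G) : idl F d = ⨆ g : G, (idl F d ⊓ cmp F d g) := by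
  apply le_antisymm
  · refine le_trans (idl_le_span_bad d) (span_le.mpr ?_)
    rintro w ⟨s, hs, rfl⟩
    exact le_iSup (fun g => idl F d ⊓ cmp F d g) ((s.map d).prod)
      ⟨mem_idl_of_not_gd hs, mem_cmp d s⟩
  · exact iSup_le fun g => inf_le_left

theorem quot_li (d : X → G) :
    LinearIndependent F (fun s : {s : List X // gd d s} =>
      Submodule.Quotient.mk (p := idl F d) (mn F s.1)) := by
  have h1 : LinearIndependent F (fun s : {s : List X // gd d s} => mn F s.1) :=
    (mn_li (F := F)).comp _ Subtype.val_injective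
  have hr : Set.range (fun s : {s : List X // gd d s} => mn F s.1) =
      mn F '' {s : List X | gd d s} := by
    rw [show (fun s : {s : List X // gd d s} => mn F s.1) = mn F ∘ Subtype.val from rfl,
      Set.range_comp, Subtype.range_coe_subtype]
  have h2 : Disjoint (span F (Set.range (fun s : {s : List X // gd d s} => mn F s.1)))
      (LinearMap.ker (idl F d).mkQ) := by
    rw [Submodule.ker_mkQ, hr]
    have hd := (mn_li (F := F) (X := X)).disjoint_span_image
      (s := {s : List X | gd d s}) (t := {s : List X | ¬ gd d s})
      (Set.disjoint_left.mpr fun a ha hna => hna ha)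
    exact hd.mono_right (idl_le_span_bad d)
  exact h1.map h2
  
theorem quot_span (d : X → G) :
    span F (Set.range (fun s : {s : List X // gd d s} =>
      Submodule.Quotient.mk (p := idl F d) (mn F s.1))) = ⊤ := by
  rw [eq_top_iff]
  rintro z -
  obtain ⟨x, rfl⟩ := (idl F d).mkQ_surjective z
  have hx : x ∈ span F (Set.range (mn F (X := X))) := by rw [span_mn_top]; trivial
  refine Submodule.span_induction
    (p := fun x _ => (idl F d).mkQ x ∈ span F (Set.range (fun s : {s : List X // gd d s} =>
      Submodule.Quotient.mk (p := idl F d) (mn F s.1)))) ?_ ?_ ?_ ?_ hx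
  · rintro w ⟨s, rfl⟩
    by_cases hs : gd d s
    · exact subset_span ⟨⟨s, hs⟩, rfl⟩
    · have h0 : (idl F d).mkQ (mn F s) = 0 := by
        rw [Submodule.mkQ_apply, Submodule.Quotient.mk_eq_zero]
        exact mem_idl_of_not_gd hs
      rw [h0]; exact zero_mem _
  · simp only [map_zero]; exact zero_mem _
  · intro a b _ _ ha hb; simp only [map_add]; exact add_mem ha hb
  · intro c a _ ha; simp only [map_smul]; exact smul_mem _ _ ha

end Stmt5Aux

/-- The `T_G`-ideal `I` of the free `G`-graded associative algebra generated by
the products of homogeneous elements of non-commuting degrees is a graded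
(two-sided) ideal, and the quotient `F_G(X_G) = F⟨X_G⟩/I` has as homogeneous
vector space basis the images of the monomials whose degrees generate an
abelian subgroup of `G`. -/
theorem stmt_5 {F G X : Type*} [Field F] [Group G] (d : X → G) :
    let mono : List X → FreeAlgebra F X := fun s => (s.map (FreeAlgebra.ι F)).prod
    let comp : G → Submodule F (FreeAlgebra F X) :=
      fun g => Submodule.span F {w | ∃ s : List X, (s.map d).prod = g ∧ w = mono s}
    let I : Submodule F (FreeAlgebra F X) :=
      Submodule.span F {w | ∃ (g h : G) (u v a b : FreeAlgebra F X),
        g * h ≠ h * g ∧ u ∈ comp g ∧ v ∈ comp h ∧ w = a * (u * v) * b}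
    let good : List X → Prop := fun s => IsMulCommutative (Subgroup.closure (d '' {x | x ∈ s}))
    -- `I` is a two-sided ideal
    (∀ r : FreeAlgebra F X, ∀ x ∈ I, r * x ∈ I ∧ x * r ∈ I) ∧
    -- `I` is a graded ideal
    (I = ⨆ g : G, (I ⊓ comp g)) ∧
    -- the good monomials give a basis of the quotient
    LinearIndependent F
      (fun s : {s : List X // good s} => Submodule.Quotient.mk (p := I) (mono s.1)) ∧
    Submodule.span F (Set.range
      (fun s : {s : List X // good s} => Submodule.Quotient.mk (p := I) (mono s.1))) = ⊤ := by
  intro mono comp I good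
  refine ⟨?_, ?_, ?_, ?_⟩
  · intro r x hx
    exact ⟨Stmt5Aux.idl_mul_left d r hx, Stmt5Aux.idl_mul_right d r hx⟩
  · exact Stmt5Aux.idl_graded d
  · exact Stmt5Aux.quot_li d
  · exact Stmt5Aux.quot_span d
end

section
/- Let G be a group, L a G-graded Lie algebra with homogeneous basis B = {e_i}, and let J_B be the ideal of the classical universal enveloping algebra U(L) generated by the set {e_i e_j : [deg e_i, deg e_j] ≠ 1}. Let I_B be the least graded ideal of the free G-graded associative algebra F⟨X_B⟩ containing the relations x_i x_j − x_j x_i − Σ_k α_{ij}^{(k)} x_k. Then F⟨X_B⟩/I_B ≅ U(L)/J_B as algebras. Equivalently, I_B = J + K, where J is the ordinary ideal generated by the relation elements and K is the ideal generated by the monomials x_i x_j with non-commuting degrees. -/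
/-- Let `L` be a `G`-graded Lie algebra with homogeneous basis indexed by `N`,
degrees `d` and structure constants `α`. In the free `G`-graded associative
algebra, the least graded ideal `I_B` containing the relations
`x_i x_j - x_j x_i - Σ_k α_{ij}^{(k)} x_k` equals `J + K`, where `J` is the
ordinary ideal generated by the relations and `K` is the ideal generated by
the monomials `x_i x_j` with non-commuting degrees; consequently
`F⟨X_B⟩/I_B ≅ U(L)/J_B`. -/
theorem stmt_8 {F G N : Type*} [Field F] [Group G] (d : N → G)
    (α : N → N → (N →₀ F))
    (hcompat : ∀ i j k : N, α i j k ≠ 0 → d k = d i * d j)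
    (hzero : ∀ i j : N, d i * d j ≠ d j * d i → α i j = 0) :
    let ι : N → FreeAlgebra F N := FreeAlgebra.ι F
    let mono : List N → FreeAlgebra F N := fun s => (s.map ι).prod
    let comp : G → Submodule F (FreeAlgebra F N) :=
      fun g => Submodule.span F {w | ∃ s : List N, (s.map d).prod = g ∧ w = mono s}
    let rel : N → N → FreeAlgebra F N := fun i j =>
      ι i * ι j - ι j * ι i - ((α i j).sum fun k c => c • ι k)
    let J : Submodule F (FreeAlgebra F N) :=
      Submodule.span F {w | ∃ (i j : N) (a b : FreeAlgebra F N), w = a * rel i j * b}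
    let K : Submodule F (FreeAlgebra F N) :=
      Submodule.span F {w | ∃ (i j : N) (a b : FreeAlgebra F N),
        d i * d j ≠ d j * d i ∧ w = a * (ι i * ι j) * b}
    let IB : Submodule F (FreeAlgebra F N) :=
      sInf {P | (∀ a b : FreeAlgebra F N, ∀ x ∈ P, a * x * b ∈ P) ∧
        (P = ⨆ g : G, (P ⊓ comp g)) ∧ (∀ i j : N, rel i j ∈ P)}
    IB = J ⊔ K ∧
    Nonempty ((FreeAlgebra F N ⧸ IB) ≃ₗ[F] ((FreeAlgebra F N ⧸ J) ⧸ (K.map J.mkQ))) := by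
  classical
  intro ι mono comp rel J K IB
  have hι : ι = FreeAlgebra.ι F := rfl
  have hmono : ∀ s : List N, mono s = (s.map ι).prod := fun _ => rfl
  -- the basis of the free algebra by monomials
  set b := FreeAlgebra.basisFreeMonoid F N with hbdef
  have hbs : ∀ s : FreeMonoid N, b s = mono (FreeMonoid.toList s) := by
    intro s
    have h : (MonoidAlgebra.single s (1:F)) = MonoidAlgebra.of F (FreeMonoid N) s := by
      simp [MonoidAlgebra.of_apply]
    rw [hbdef, FreeAlgebra.basisFreeMonoid, Module.Basis.map_apply, Finsupp.coe_basisSingleOne]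
    show FreeAlgebra.equivMonoidAlgebraFreeMonoid.symm (MonoidAlgebra.single s (1:F)) = _
    rw [h, FreeAlgebra.equivMonoidAlgebraFreeMonoid]
    show (MonoidAlgebra.lift F (FreeAlgebra F N) (FreeMonoid N))
      (FreeMonoid.lift (FreeAlgebra.ι F)) _ = _
    rw [MonoidAlgebra.lift_of, FreeMonoid.lift_apply]
  have hmono_b : ∀ s : List N, mono s = b (FreeMonoid.ofList s) := by
    intro s; rw [hbs]; rfl
  -- basic membership facts
  have mono_mem : ∀ s : List N, mono s ∈ comp ((s.map d).prod) := fun s =>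
    Submodule.subset_span ⟨s, rfl, rfl⟩
  have mono_append : ∀ s t : List N, mono (s ++ t) = mono s * mono t := by
    intro s t; rw [hmono, hmono, hmono, List.map_append, List.prod_append]
  have hiotaij : ∀ i j : N, ι i * ι j = mono [i, j] := by
    intro i j; rw [hmono]; simp
  -- every element is a span of monomials
  have hspan : ∀ a : FreeAlgebra F N, a ∈ Submodule.span F (Set.range mono) := by
    intro a
    have h1 : a ∈ Submodule.span F (Set.range b) := by rw [b.span_eq]; trivial
    refine Submodule.span_mono ?_ h1
    rintro _ ⟨s, rfl⟩
    exact ⟨FreeMonoid.toList s, (hbs s).symm⟩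
  -- multiplicativity of the grading
  have comp_mul : ∀ {g g' : G} {x y : FreeAlgebra F N},
      x ∈ comp g → y ∈ comp g' → x * y ∈ comp (g * g') := by
    intro g g' x y hx hy
    induction hx using Submodule.span_induction with
    | mem x hxm =>
      induction hy using Submodule.span_induction with
      | mem y hym =>
        obtain ⟨s, hs, rfl⟩ := hxm
        obtain ⟨t, ht, rfl⟩ := hym
        refine Submodule.subset_span ⟨s ++ t, ?_, (mono_append s t).symm⟩
        rw [List.map_append, List.prod_append, hs, ht]
      | zero => simpa using Submodule.zero_mem _
      | add y₁ y₂ h₁ h₂ ih₁ ih₂ => simpa [mul_add] using Submodule.add_mem _ ih₁ ih₂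
      | smul c y₁ h₁ ih => simpa [mul_smul_comm] using Submodule.smul_mem _ c ih
    | zero => simpa using Submodule.zero_mem _
    | add x₁ x₂ h₁ h₂ ih₁ ih₂ => simpa [add_mul] using Submodule.add_mem _ ih₁ ih₂
    | smul c x₁ h₁ ih => simpa [smul_mul_assoc] using Submodule.smul_mem _ c ih
  -- J and K are two-sided stable
  have Jclosed : ∀ a b x, x ∈ J → a * x * b ∈ J := by
    intro a bb x hx
    induction hx using Submodule.span_induction with
    | mem w hw =>
      obtain ⟨i, j, a', b', rfl⟩ := hw
      refine Submodule.subset_span ⟨i, j, a * a', b' * bb, by noncomm_ring⟩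
    | zero => simpa using Submodule.zero_mem J
    | add x₁ x₂ h₁ h₂ ih₁ ih₂ => simpa [mul_add, add_mul] using Submodule.add_mem J ih₁ ih₂
    | smul c x₁ h₁ ih => simpa [mul_smul_comm, smul_mul_assoc] using Submodule.smul_mem J c ih
  have Kclosed : ∀ a b x, x ∈ K → a * x * b ∈ K := by
    intro a bb x hx
    induction hx using Submodule.span_induction with
    | mem w hw =>
      obtain ⟨i, j, a', b', hne, rfl⟩ := hw
      refine Submodule.subset_span ⟨i, j, a * a', b' * bb, hne, by noncomm_ring⟩
    | zero => simpa using Submodule.zero_mem K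
    | add x₁ x₂ h₁ h₂ ih₁ ih₂ => simpa [mul_add, add_mul] using Submodule.add_mem K ih₁ ih₂
    | smul c x₁ h₁ ih => simpa [mul_smul_comm, smul_mul_assoc] using Submodule.smul_mem K c ih
  have JKclosed : ∀ a b x, x ∈ J ⊔ K → a * x * b ∈ J ⊔ K := by
    intro a bb x hx
    rcases Submodule.mem_sup.1 hx with ⟨y, hy, z, hz, rfl⟩
    have : a * (y + z) * bb = a * y * bb + a * z * bb := by noncomm_ring
    rw [this]
    exact Submodule.add_mem _ (Submodule.mem_sup_left (Jclosed a bb y hy))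
      (Submodule.mem_sup_right (Kclosed a bb z hz))
  -- the homogeneous projections
  set v : G → FreeMonoid N → FreeAlgebra F N := fun g₀ s =>
    if ((FreeMonoid.toList s).map d).prod = g₀ then mono (FreeMonoid.toList s) else 0 with hv
  set proj : G → FreeAlgebra F N →ₗ[F] FreeAlgebra F N := fun g₀ =>
    (Finsupp.linearCombination F (v g₀)) ∘ₗ (b.repr : FreeAlgebra F N →ₗ[F] _) with hproj
  have proj_mono : ∀ (g₀ : G) (s : List N),
      proj g₀ (mono s) = if (s.map d).prod = g₀ then mono s else 0 := by
    intro g₀ s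
    rw [hproj]
    simp only [LinearMap.comp_apply, LinearEquiv.coe_coe]
    rw [hmono_b s, b.repr_self, Finsupp.linearCombination_single, one_smul, hv,
      ← hmono_b s]
    rfl
  have proj_self : ∀ (g₀ : G) (x : FreeAlgebra F N), x ∈ comp g₀ → proj g₀ x = x := by
    intro g₀ x hx
    induction hx using Submodule.span_induction with
    | mem w hw =>
      obtain ⟨s, hs, rfl⟩ := hw
      rw [proj_mono, if_pos hs]
    | zero => exact map_zero _
    | add x₁ x₂ h₁ h₂ ih₁ ih₂ => rw [map_add, ih₁, ih₂]
    | smul c x₁ h₁ ih => rw [map_smul, ih]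
  have proj_ne : ∀ (g g₀ : G), g ≠ g₀ → ∀ (x : FreeAlgebra F N), x ∈ comp g →
      proj g₀ x = 0 := by
    intro g g₀ hgg x hx
    induction hx using Submodule.span_induction with
    | mem w hw =>
      obtain ⟨s, hs, rfl⟩ := hw
      rw [proj_mono, if_neg (hs ▸ hgg)]
    | zero => exact map_zero _
    | add x₁ x₂ h₁ h₂ ih₁ ih₂ => rw [map_add, ih₁, ih₂, add_zero]
    | smul c x₁ h₁ ih => rw [map_smul, ih, smul_zero]
  -- graded submodules are stable under projections
  have graded_mem : ∀ (P : Submodule F (FreeAlgebra F N)) (x : FreeAlgebra F N),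
      x ∈ (⨆ g : G, (P ⊓ comp g)) → ∀ g₀ : G, proj g₀ x ∈ P := by
    intro P x hx g₀
    refine Submodule.iSup_induction (motive := fun y => proj g₀ y ∈ P) _ hx ?_ ?_ ?_
    · intro g y hy
      rcases hy with ⟨hyP, hyc⟩
      by_cases hgg : g = g₀
      · rw [proj_self g₀ y (hgg ▸ hyc)]; exact hyP
      · rw [proj_ne g g₀ hgg y hyc]; exact Submodule.zero_mem P
    · simpa using Submodule.zero_mem P
    · intro x₁ x₂ ih₁ ih₂
      rw [map_add]; exact Submodule.add_mem P ih₁ ih₂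
  -- key: homogeneous elements of J ⊔ K stay in the graded sup after two-sided mult
  have key : ∀ (g : G) (x : FreeAlgebra F N), x ∈ J ⊔ K → x ∈ comp g →
      ∀ a bb : FreeAlgebra F N, a * x * bb ∈ ⨆ g' : G, ((J ⊔ K) ⊓ comp g') := by
    intro g x hxJK hxc a bb
    have ha := hspan a
    induction ha using Submodule.span_induction with
    | mem a hma =>
      obtain ⟨s, rfl⟩ := hma
      have hb := hspan bb
      induction hb using Submodule.span_induction with
      | mem bb hmb =>
        obtain ⟨t, rfl⟩ := hmb
        refine Submodule.mem_iSup_of_mem ((s.map d).prod * g * (t.map d).prod) ⟨?_, ?_⟩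
        · exact JKclosed _ _ _ hxJK
        · exact comp_mul (comp_mul (mono_mem s) hxc) (mono_mem t)
      | zero => simpa using Submodule.zero_mem _
      | add y₁ y₂ h₁ h₂ ih₁ ih₂ => simpa [mul_add] using Submodule.add_mem _ ih₁ ih₂
      | smul c y₁ h₁ ih => simpa [mul_smul_comm] using Submodule.smul_mem _ c ih
    | zero => simpa using Submodule.zero_mem _
    | add x₁ x₂ h₁ h₂ ih₁ ih₂ => simpa [add_mul] using Submodule.add_mem _ ih₁ ih₂
    | smul c x₁ h₁ ih => simpa [smul_mul_assoc] using Submodule.smul_mem _ c ih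
  -- degree computations
  have deg_two : ∀ i j : N, (([i, j] : List N).map d).prod = d i * d j := by
    intro i j; simp
  have hijK : ∀ i j : N, d i * d j ≠ d j * d i → ι i * ι j ∈ K := fun i j hne =>
    Submodule.subset_span ⟨i, j, 1, 1, hne, by rw [one_mul, mul_one]⟩
  have hrelJ : ∀ i j : N, rel i j ∈ J := fun i j =>
    Submodule.subset_span ⟨i, j, 1, 1, by rw [one_mul, mul_one]⟩
  have hiotac : ∀ i j : N, ι i * ι j ∈ comp (d i * d j) := by
    intro i j
    rw [hiotaij]
    have := mono_mem [i, j]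
    rwa [deg_two] at this
  -- J ⊔ K is graded
  have gradedJK : J ⊔ K = ⨆ g : G, ((J ⊔ K) ⊓ comp g) := by
    refine le_antisymm (sup_le (Submodule.span_le.2 ?_) (Submodule.span_le.2 ?_))
      (iSup_le fun g => inf_le_left)
    · rintro w ⟨i, j, a, bb, rfl⟩
      by_cases hij : d i * d j = d j * d i
      · -- commuting degrees: rel i j is homogeneous
        have hrelc : rel i j ∈ comp (d i * d j) := by
          refine Submodule.sub_mem _ (Submodule.sub_mem _ (hiotac i j) ?_) ?_
          · have := hiotac j i; rwa [← hij] at this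
          · refine Submodule.sum_mem _ ?_
            intro k hk
            refine Submodule.smul_mem _ _ ?_
            have hk' : α i j k ≠ 0 := Finsupp.mem_support_iff.1 hk
            have hdk := hcompat i j k hk'
            have : ι k = mono [k] := by rw [hmono]; simp
            rw [this, ← hdk]
            have := mono_mem [k]
            simpa using this
        exact key _ _ (Submodule.mem_sup_left (hrelJ i j)) hrelc a bb
      · -- non-commuting degrees: rel i j = x_i x_j - x_j x_i, both pieces in K
        have hα : α i j = 0 := hzero i j hij
        have hrw : a * rel i j * bb = a * (ι i * ι j) * bb - a * (ι j * ι i) * bb := by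
          show a * (ι i * ι j - ι j * ι i - ((α i j).sum fun k c => c • ι k)) * bb = _
          rw [hα, Finsupp.sum_zero_index]
          noncomm_ring
        rw [hrw]
        refine Submodule.sub_mem _ ?_ ?_
        · exact key _ _ (Submodule.mem_sup_right (hijK i j hij)) (hiotac i j) a bb
        · exact key _ _ (Submodule.mem_sup_right (hijK j i (Ne.symm hij))) (hiotac j i) a bb
    · rintro w ⟨i, j, a, bb, hne, rfl⟩
      exact key _ _ (Submodule.mem_sup_right (hijK i j hne)) (hiotac i j) a bb
  -- main equality
  have hmain : IB = J ⊔ K := by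
    refine le_antisymm (sInf_le ⟨JKclosed, gradedJK, fun i j => Submodule.mem_sup_left (hrelJ i j)⟩) ?_
    refine sup_le ?_ ?_
    · refine le_sInf ?_
      rintro P ⟨hPc, hPg, hPr⟩
      refine Submodule.span_le.2 ?_
      rintro w ⟨i, j, a, bb, rfl⟩
      exact hPc a bb _ (hPr i j)
    · refine le_sInf ?_
      rintro P ⟨hPc, hPg, hPr⟩
      refine Submodule.span_le.2 ?_
      rintro w ⟨i, j, a, bb, hne, rfl⟩
      have hα : α i j = 0 := hzero i j hne
      have h1 : rel i j ∈ ⨆ g : G, (P ⊓ comp g) := hPg ▸ hPr i j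
      have h2 : proj (d i * d j) (rel i j) ∈ P := graded_mem P _ h1 _
      have h3 : proj (d i * d j) (rel i j) = ι i * ι j := by
        have hrw : rel i j = mono [i, j] - mono [j, i] := by
          show ι i * ι j - ι j * ι i - ((α i j).sum fun k c => c • ι k) = _
          rw [hα, Finsupp.sum_zero_index, hiotaij i j, hiotaij j i, sub_zero]
        rw [hrw, map_sub, proj_mono, proj_mono, deg_two, deg_two,
          if_pos rfl, if_neg (Ne.symm hne), sub_zero, hiotaij]
      rw [h3] at h2
      exact hPc a bb _ h2
  refine ⟨hmain, ?_⟩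
  have hJbot : Submodule.map J.mkQ J = ⊥ := by
    rw [eq_bot_iff, Submodule.map_le_iff_le_comap]
    intro x hx
    simp only [Submodule.mem_comap, Submodule.mem_bot]
    exact (Submodule.Quotient.mk_eq_zero J).2 hx
  have hmapJK : Submodule.map J.mkQ (J ⊔ K) = Submodule.map J.mkQ K := by
    rw [Submodule.map_sup, hJbot, bot_sup_eq]
  have e := Submodule.quotientQuotientEquivQuotient J (J ⊔ K) le_sup_left
  rw [hmapJK] at e
  rw [hmain]
  exact ⟨e.symm⟩
end

section
/- Let G be a group, L and H finite-dimensional G-graded Lie algebras, and ρ : H → End_F(L) a Lie algebra homomorphism (into End with the commutator bracket) that is also a G-graded linear map (ρ sends H_g into the degree-g homogeneous endomorphisms of L). Then the image ρ(H) is a G-graded Lie algebra: for homogeneous u, v ∈ Im ρ, either [u, v] = 0 or [u, v] is homogeneous of degree (deg u)(deg v). -/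
/-- If `ρ : H → End_F(L)` is a Lie algebra homomorphism (for the commutator on
`End_F(L)`) between finite-dimensional `G`-graded Lie algebras which is a
`G`-graded linear map, then the image of `ρ` is a `G`-graded Lie algebra: for
homogeneous `u, v ∈ Im ρ`, the commutator `[u, v]` lies in the image of the
component of degree `(deg u)(deg v)` and is homogeneous of that degree
(possibly zero). -/
theorem stmt_16 {F G L H : Type*} [Field F] [Group G] [DecidableEq G]
    [LieRing L] [LieAlgebra F L] [FiniteDimensional F L]
    [LieRing H] [LieAlgebra F H] [FiniteDimensional F H]
    (ℒ : G → Submodule F L) (hL : DirectSum.IsInternal ℒ)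
    (hLbrk : ∀ g h : G, ∀ x ∈ ℒ g, ∀ y ∈ ℒ h, ⁅x, y⁆ ∈ ℒ (g * h))
    (ℋ : G → Submodule F H) (hH : DirectSum.IsInternal ℋ)
    (hHbrk : ∀ g h : G, ∀ x ∈ ℋ g, ∀ y ∈ ℋ h, ⁅x, y⁆ ∈ ℋ (g * h))
    (ρ : H →ₗ[F] Module.End F L)
    (hρlie : ∀ x y : H, ρ ⁅x, y⁆ = ρ x * ρ y - ρ y * ρ x)
    (hρgr : ∀ g : G, ∀ x ∈ ℋ g, ∀ h : G, ∀ m ∈ ℒ h, ρ x m ∈ ℒ (g * h)) :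
    ∀ g h : G, ∀ u ∈ (ℋ g).map ρ, ∀ v ∈ (ℋ h).map ρ,
      u * v - v * u ∈ (ℋ (g * h)).map ρ ∧
      ∀ k : G, ∀ m ∈ ℒ k, (u * v - v * u) m ∈ ℒ (g * h * k) := by
  rintro g h u ⟨x, hx, rfl⟩ v ⟨y, hy, rfl⟩
  have key : ρ x * ρ y - ρ y * ρ x = ρ ⁅x, y⁆ := (hρlie x y).symm
  rw [key]
  refine ⟨⟨⁅x, y⁆, hHbrk g h x hx y hy, rfl⟩, ?_⟩
  intro k m hm
  exact hρgr (g * h) _ (hHbrk g h x hx y hy) k m hm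
end

section
/- Let G be the free group on three generators α₁, α₂, α₃, and let L be the 3-dimensional abelian Lie algebra over a field F with basis x₁, x₂, x₃ graded by deg x_i = α_i. Then there is no G-grading on End_F(L) ≅ Der(L) making it a G-graded Lie algebra under the commutator such that each elementary matrix e_{ij} is homogeneous of degree α_i α_j^{-1}. In particular, e₁₂ and e₂₃ have non-commuting degrees but e₁₂ e₂₃ = e₁₃ ≠ 0, contradicting the vanishing lemma. -/
private def auxE {F : Type*} [Field F] (i j : Fin 3) : Module.End F (Fin 3 → F) :=
  (LinearMap.proj j : (Fin 3 → F) →ₗ[F] F).smulRight (Pi.single i 1)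

private lemma auxE_mul {F : Type*} [Field F] :
    (auxE 0 1 : Module.End F (Fin 3 → F)) * auxE 1 2 = auxE 0 2 := by
  refine LinearMap.ext fun v => ?_
  simp only [auxE, Module.End.mul_apply, LinearMap.smulRight_apply, LinearMap.proj_apply,
    Pi.smul_apply, smul_eq_mul, Pi.single_apply]
  norm_num

private lemma auxE_mul2 {F : Type*} [Field F] :
    (auxE 1 2 : Module.End F (Fin 3 → F)) * auxE 0 1 = 0 := by
  refine LinearMap.ext fun v => funext fun k => ?_
  simp only [auxE, Module.End.mul_apply, LinearMap.smulRight_apply, LinearMap.proj_apply,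
    Pi.smul_apply, smul_eq_mul, Pi.single_apply, LinearMap.zero_apply, Pi.zero_apply]
  norm_num
  exact fun _ h => absurd h (by decide)

private lemma auxE_ne {F : Type*} [Field F] : (auxE 0 2 : Module.End F (Fin 3 → F)) ≠ 0 := by
  intro h
  have := congrFun (congrArg (fun f : Module.End F (Fin 3 → F) => f (Pi.single 2 1)) h) 0
  simp only [auxE, LinearMap.smulRight_apply, LinearMap.proj_apply, Pi.smul_apply,
    smul_eq_mul, Pi.single_apply, Pi.zero_apply, LinearMap.zero_apply] at this
  norm_num at this

/-- Let `G` be the free group on three generators `α₁, α₂, α₃` and `L` the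
3-dimensional abelian Lie algebra with basis `x₁, x₂, x₃`, `deg xᵢ = αᵢ`.
There is no `G`-grading on `End_F(L) = Der(L)` making it a `G`-graded Lie
algebra under the commutator with each `e_{ij}` homogeneous of degree
`αᵢ αⱼ⁻¹`. In particular the degrees of `e₁₂` and `e₂₃` do not commute, yet
`e₁₂ e₂₃ = e₁₃ ≠ 0`. -/
theorem stmt_17 {F : Type*} [Field F] :
    let G := FreeGroup (Fin 3)
    let V := Fin 3 → F
    let e : Fin 3 → Fin 3 → Module.End F V := fun i j =>
      (LinearMap.proj j : V →ₗ[F] F).smulRight (Pi.single i 1)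
    let dg : Fin 3 → Fin 3 → G := fun i j => FreeGroup.of i * (FreeGroup.of j)⁻¹
    (¬ ∃ 𝒜 : G → Submodule F (Module.End F V),
        DirectSum.IsInternal 𝒜 ∧
        (∀ g h : G, ∀ a ∈ 𝒜 g, ∀ b ∈ 𝒜 h, a * b - b * a ∈ 𝒜 (g * h)) ∧
        (∀ i j : Fin 3, e i j ∈ 𝒜 (dg i j))) ∧
    dg 0 1 * dg 1 2 ≠ dg 1 2 * dg 0 1 ∧
    e 0 1 * e 1 2 = e 0 2 ∧
    e 0 2 ≠ 0 := by
  intro G V e dg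
  have hmul : e 0 1 * e 1 2 = e 0 2 := auxE_mul
  have hmul2 : e 1 2 * e 0 1 = 0 := auxE_mul2
  have hne : e 0 2 ≠ 0 := auxE_ne
  refine ⟨?_, by decide, hmul, hne⟩
  rintro ⟨𝒜, hint, hbr, hhom⟩
  have h1 : e 0 2 ∈ 𝒜 (dg 0 1 * dg 1 2) := by
    have := hbr _ _ _ (hhom 0 1) _ (hhom 1 2)
    rwa [hmul, hmul2, sub_zero] at this
  have h2 : e 0 2 ∈ 𝒜 (dg 1 2 * dg 0 1) := by
    have := hbr _ _ _ (hhom 1 2) _ (hhom 0 1)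
    rw [hmul, hmul2, zero_sub] at this
    simpa using neg_mem this
  have hgh : dg 0 1 * dg 1 2 ≠ dg 1 2 * dg 0 1 := by decide
  have hdisj := hint.submodule_iSupIndep.pairwiseDisjoint hgh
  exact hne (Submodule.disjoint_def.mp hdisj _ h1 h2)
end
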